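/- Let R be a Noetherian commutative ring and let M, M', N be finitely generated R-modules with N ≠ 0. Then asn_N(M) + asn_N(M') ≤ asn_N(M ⊕ M'); that is, if L, L' and L'' are the limits of the sequences r ↦ surj_N(M^{⊕r})/r, r ↦ surj_N(M'^{⊕r})/r and r ↦ surj_N((M ⊕ M')^{⊕r})/r respectively, then L + L' ≤ L''. -/

import Mathlib

/-- The surjective number `surj_N(M)`: the largest `n` such that there is a
surjective `R`-linear map `M → N^{⊕n}` (the direct sum of `n` copies of `N`). -/
noncomputable def surjNum (R M N : Type*) [CommRing R] [AddCommGroup M] [Module R M]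
    [AddCommGroup N] [Module R N] : ℕ :=
  sSup {n : ℕ | ∃ f : M →ₗ[R] (Fin n → N), Function.Surjective f}

/-!
Surjections `M^r ↠ N^a` and `M'^r ↠ N^b` combine into a surjection
`(M ⊕ M')^r ≅ M^r ⊕ M'^r ↠ N^(a+b)`, so `surj_N` is superadditive for every `r` and the
inequality passes to the limits. The supremum defining `surj_N(P)` is attained because `N`
surjects onto a residue field `R ⧸ m`, and a surjection `P ↠ (R ⧸ m)^n` forces `n` to be at
most the number of generators of `P`.
-/

open Function Submodule

section

variable {R : Type*} [CommRing R]

theorem le_spanFinrank_of_surjective_pi_quotient {P : Type*} [AddCommGroup P] [Module R P]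
    [Module.Finite R P] {I : Ideal R} (hI : I ≠ ⊤) {n : ℕ} (f : P →ₗ[R] (Fin n → R ⧸ I))
    (hf : Surjective f) : n ≤ (⊤ : Submodule R P).spanFinrank := by
  have : Nontrivial (R ⧸ I) := Ideal.Quotient.nontrivial_iff.mpr hI
  calc n = (⊤ : Submodule (R ⧸ I) (Fin n → R ⧸ I)).spanFinrank := by
        rw [← Module.finrank_eq_spanFinrank_of_free, Module.finrank_fin_fun]
    _ = ((⊤ : Submodule (R ⧸ I) (Fin n → R ⧸ I)).restrictScalars R).spanFinrank := by
        rw [spanFinrank, spanFinrank, spanRank_restrictScalars_eq Ideal.Quotient.mk_surjective]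
    _ = ((⊤ : Submodule R P).map f).spanFinrank := by
        rw [restrictScalars_top, Submodule.map_top, LinearMap.range_eq_top.mpr hf]
    _ ≤ (⊤ : Submodule R P).spanFinrank := spanFinrank_map_le_of_fg f Module.Finite.fg_top

theorem Module.Finite.exists_isMaximal_surjective_quotient (N : Type*) [AddCommGroup N]
    [Module R N] [Module.Finite R N] [Nontrivial N] :
    ∃ I : Ideal R, I.IsMaximal ∧ ∃ φ : N →ₗ[R] R ⧸ I, Surjective φ := by
  obtain ⟨p, hp⟩ := IsCoatomic.exists_coatom (α := Submodule R N)
  have : IsSimpleModule R (N ⧸ p) := isSimpleModule_iff_isCoatom.mpr hp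
  obtain ⟨I, hI, ⟨e⟩⟩ := isSimpleModule_iff_quot_maximal.mp this
  exact ⟨I, hI, e.toLinearMap ∘ₗ p.mkQ, e.surjective.comp p.mkQ_surjective⟩

variable {M M' N : Type*} [AddCommGroup M] [Module R M] [AddCommGroup M'] [Module R M']
  [AddCommGroup N] [Module R N] [Module.Finite R N] [Nontrivial N]

theorem bddAbove_setOf_exists_surjective [Module.Finite R M] :
    BddAbove {n : ℕ | ∃ f : M →ₗ[R] (Fin n → N), Surjective f} := by
  obtain ⟨I, hI, φ, hφ⟩ := Module.Finite.exists_isMaximal_surjective_quotient (R := R) N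
  refine ⟨(⊤ : Submodule R M).spanFinrank, fun n ⟨f, hf⟩ => ?_⟩
  exact le_spanFinrank_of_surjective_pi_quotient hI.ne_top (φ.compLeft (Fin n) ∘ₗ f)
    (hφ.comp_left.comp hf)

theorem le_surjNum_of_surjective [Module.Finite R M] {n : ℕ} (f : M →ₗ[R] (Fin n → N))
    (hf : Surjective f) : n ≤ surjNum R M N :=
  le_csSup bddAbove_setOf_exists_surjective ⟨f, hf⟩

theorem exists_surjective_surjNum [Module.Finite R M] :
    ∃ f : M →ₗ[R] (Fin (surjNum R M N) → N), Surjective f :=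
  Nat.sSup_mem (s := {n : ℕ | ∃ f : M →ₗ[R] (Fin n → N), Surjective f})
    ⟨0, 0, fun _ => ⟨0, Subsingleton.elim _ _⟩⟩ bddAbove_setOf_exists_surjective

theorem surjNum_le_surjNum_of_surjective [Module.Finite R M'] (π : M' →ₗ[R] M)
    (hπ : Surjective π) : surjNum R M N ≤ surjNum R M' N := by
  have : Module.Finite R M := Module.Finite.of_surjective π hπ
  obtain ⟨f, hf⟩ := exists_surjective_surjNum (R := R) (M := M) (N := N)
  exact le_surjNum_of_surjective (f ∘ₗ π) (hf.comp hπ)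

theorem surjNum_add_surjNum_le_surjNum_prod [Module.Finite R M] [Module.Finite R M'] :
    surjNum R M N + surjNum R M' N ≤ surjNum R (M × M') N := by
  obtain ⟨f, hf⟩ := exists_surjective_surjNum (R := R) (M := M) (N := N)
  obtain ⟨f', hf'⟩ := exists_surjective_surjNum (R := R) (M := M') (N := N)
  let e : ((Fin (surjNum R M N) → N) × (Fin (surjNum R M' N) → N)) ≃ₗ[R]
      (Fin (surjNum R M N + surjNum R M' N) → N) :=
    (LinearEquiv.sumArrowLequivProdArrow _ _ R N).symm ≪≫ₗ
      LinearEquiv.funCongrLeft R N finSumFinEquiv.symm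
  exact le_surjNum_of_surjective (e.toLinearMap ∘ₗ f.prodMap f')
    (e.surjective.comp (hf.prodMap hf'))

theorem surjNum_pi_add_surjNum_pi_le_surjNum_pi_prod {ι : Type*} [Finite ι]
    [Module.Finite R M] [Module.Finite R M'] :
    surjNum R (ι → M) N + surjNum R (ι → M') N ≤ surjNum R (ι → M × M') N := by
  let π : (ι → M × M') →ₗ[R] (ι → M) × (ι → M') :=
    ((LinearMap.fst R M M').compLeft ι).prod ((LinearMap.snd R M M').compLeft ι)
  exact surjNum_add_surjNum_le_surjNum_prod.trans <|
    surjNum_le_surjNum_of_surjective π fun x => ⟨fun i => (x.1 i, x.2 i), rfl⟩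

end

theorem asn_superadditive_general
    {R : Type*} [CommRing R]
    {M M' N : Type*} [AddCommGroup M] [Module R M] [AddCommGroup M'] [Module R M']
    [AddCommGroup N] [Module R N]
    [Module.Finite R M] [Module.Finite R M'] [Module.Finite R N] (hN : Nontrivial N)
    (L L' L'' : ℝ)
    (hL : Filter.Tendsto
      (fun r : ℕ => (surjNum R (Fin r → M) N : ℝ) / r) Filter.atTop (nhds L))
    (hL' : Filter.Tendsto
      (fun r : ℕ => (surjNum R (Fin r → M') N : ℝ) / r) Filter.atTop (nhds L'))
    (hL'' : Filter.Tendsto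
      (fun r : ℕ => (surjNum R (Fin r → M × M') N : ℝ) / r) Filter.atTop (nhds L'')) :
    L + L' ≤ L'' := by
  refine le_of_tendsto_of_tendsto' (hL.add hL') hL'' fun r => ?_
  rw [← add_div]
  gcongr
  exact_mod_cast surjNum_pi_add_surjNum_pi_le_surjNum_pi_prod

/-- Superadditivity of the asymptotic surjective number:
`asn_N(M) + asn_N(M') ≤ asn_N(M ⊕ M')`.  Here `L`, `L'`, `L''` are the limits of
`surj_N(M^{⊕r})/r`, `surj_N(M'^{⊕r})/r` and `surj_N((M ⊕ M')^{⊕r})/r`. -/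
theorem asn_superadditive
    {R : Type*} [CommRing R] [IsNoetherianRing R]
    {M M' N : Type*} [AddCommGroup M] [Module R M] [AddCommGroup M'] [Module R M']
    [AddCommGroup N] [Module R N]
    [Module.Finite R M] [Module.Finite R M'] [Module.Finite R N] (hN : Nontrivial N)
    (L L' L'' : ℝ)
    (hL : Filter.Tendsto
      (fun r : ℕ => (surjNum R (Fin r → M) N : ℝ) / r) Filter.atTop (nhds L))
    (hL' : Filter.Tendsto
      (fun r : ℕ => (surjNum R (Fin r → M') N : ℝ) / r) Filter.atTop (nhds L'))
    (hL'' : Filter.Tendsto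
      (fun r : ℕ => (surjNum R (Fin r → M × M') N : ℝ) / r) Filter.atTop (nhds L'')) :
    L + L' ≤ L'' :=
  asn_superadditive_general hN L L' L'' hL hL' hL''
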